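/- arXiv:2005.10817 — 4 statements merged into one kernel-verified Lean document; each statement's English description precedes it below -/
import Mathlib

section
/- For all real a > 0 and b ≥ 1/2, the integral ∫₀^∞ exp(-a x^{1/b}) dx equals Γ(b+1)/a^b, and this is at most √(π/2)·(b/a)^b. -/
/-! The identity is the substitution `t = a x^(1/b)` in Euler's integral.
For the bound, `Γ(b+1) / b^b` does not increase under `b ↦ b + 1`, since
`Γ(b+2) = (b+1) Γ(b+1)` and `b^b ≤ (b+1)^b`, so it suffices to treat `b ∈ [1/2, 3/2]`.
There `log Γ(b+1) - b log b` is bounded by `log Γ(b+1) - (log c + 1) b + c` (tangent line of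
`b log b` at `c`), a convex function of `b`, hence bounded by its values at the endpoints of a
subinterval. Equality at `b = 1/2` forces `c = 1/2` near there, and that chord cannot reach `3/2`;
the tangent points `c = 1/2` on `[1/2, 1]` and `c = 1` on `[1, 3/2]` reduce everything to
`π ≥ 2`, `e π ≥ 8` and `8 e ≥ 9`. -/

open MeasureTheory Real Set

lemma convexOn_log_Gamma_add_one_sub_mul (β : ℝ) :
    ConvexOn ℝ (Ioi (-1)) fun x ↦ log (Gamma (x + 1)) - β * x := by
  refine ⟨convex_Ioi (-1), fun x hx y hy a b ha hb hab ↦ ?_⟩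
  have h := convexOn_log_Gamma.2 (x := x + 1) (y := y + 1) (by rw [mem_Ioi] at hx ⊢; linarith)
    (by rw [mem_Ioi] at hy ⊢; linarith) ha hb hab
  have e : a * (x + 1) + b * (y + 1) = a * x + b * y + 1 := by linear_combination hab
  simp only [smul_eq_mul, Function.comp_apply, e] at h ⊢
  linarith

lemma mul_log_add_sub_le_mul_log {x c : ℝ} (hx : 0 < x) (hc : 0 < c) :
    x * log c + x - c ≤ x * log x := by
  have h := mul_le_mul_of_nonneg_left (log_le_sub_one_of_pos (div_pos hc hx)) hx.le
  rw [log_div hc.ne' hx.ne', mul_sub_one, mul_div_cancel₀ _ hx.ne'] at h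
  linarith

lemma log_Gamma_add_one_sub_mul_log_le {p q c x M : ℝ} (hp : 0 < p) (hc : 0 < c)
    (hx : x ∈ Icc p q)
    (hpM : log (Gamma (p + 1)) - (log c + 1) * p + c ≤ M)
    (hqM : log (Gamma (q + 1)) - (log c + 1) * q + c ≤ M) :
    log (Gamma (x + 1)) - x * log x ≤ M := by
  have hpq : p ≤ q := hx.1.trans hx.2
  have hseg := (convexOn_log_Gamma_add_one_sub_mul (log c + 1)).le_on_segment
    (mem_Ioi.2 (by linarith)) (mem_Ioi.2 (by linarith)) (segment_eq_Icc hpq ▸ hx)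
  have htangent := mul_log_add_sub_le_mul_log (hp.trans_le hx.1) hc
  have hmax : max (log (Gamma (p + 1)) - (log c + 1) * p) (log (Gamma (q + 1)) - (log c + 1) * q)
      ≤ M - c := max_le (by linarith) (by linarith)
  linarith

lemma three_mul_log_two_le_one_add_log_pi : 3 * log 2 ≤ 1 + log π :=
  calc 3 * log 2 = log (2 ^ 3) := by rw [log_pow]; norm_num
    _ ≤ log (exp 1 * π) :=
      log_le_log (by norm_num) (by nlinarith [exp_one_gt_d9, pi_gt_three])
    _ = 1 + log π := by rw [log_mul (exp_pos 1).ne' pi_ne_zero, log_exp]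

lemma two_mul_log_three_le_one_add_three_mul_log_two : 2 * log 3 ≤ 1 + 3 * log 2 :=
  calc 2 * log 3 = log (3 ^ 2) := by rw [log_pow]; norm_num
    _ ≤ log (exp 1 * 2 ^ 3) :=
      log_le_log (by norm_num) (by nlinarith [exp_one_gt_d9])
    _ = 1 + 3 * log 2 := by rw [log_mul (exp_pos 1).ne' (by norm_num), log_exp, log_pow]; norm_num

lemma log_Gamma_three_halves : log (Gamma (1 / 2 + 1)) = log π / 2 - log 2 := by
  rw [Gamma_add_one one_half_pos.ne', Gamma_one_half_eq, log_mul (by norm_num) (by positivity),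
    log_sqrt pi_pos.le, one_div, log_inv]
  ring

lemma log_Gamma_five_halves : log (Gamma (3 / 2 + 1)) = log 3 - 2 * log 2 + log π / 2 := by
  have h : Gamma (3 / 2 + 1) = 3 / 4 * √π := by
    rw [Gamma_add_one (by norm_num), show (3 / 2 : ℝ) = 1 / 2 + 1 by norm_num,
      Gamma_add_one one_half_pos.ne', Gamma_one_half_eq]
    ring
  rw [h, log_mul (by norm_num) (by positivity), log_div (by norm_num) (by norm_num),
    log_sqrt pi_pos.le, show (4 : ℝ) = 2 ^ 2 by norm_num, log_pow]
  push_cast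
  ring

lemma log_Gamma_add_one_sub_mul_log_le_of_mem_Icc {x : ℝ} (hx : x ∈ Icc (1 / 2) (3 / 2)) :
    log (Gamma (x + 1)) - x * log x ≤ (log π - log 2) / 2 := by
  have hlog2 : log 2 ≤ log π := log_le_log (by norm_num) (by linarith [pi_gt_three])
  have hhalf : log (1 / 2) = -log 2 := by rw [one_div, log_inv]
  have hGamma_two : log (Gamma (1 + 1)) = 0 := by norm_num
  rcases le_total x 1 with h | h
  · refine log_Gamma_add_one_sub_mul_log_le one_half_pos one_half_pos ⟨hx.1, h⟩ ?_ ?_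
    · rw [log_Gamma_three_halves, hhalf]; linarith
    · rw [hGamma_two, hhalf]; linarith [three_mul_log_two_le_one_add_log_pi]
  · refine log_Gamma_add_one_sub_mul_log_le one_pos one_pos ⟨h, hx.2⟩ ?_ ?_
    · rw [hGamma_two, log_one]; linarith
    · rw [log_Gamma_five_halves, log_one]
      linarith [two_mul_log_three_le_one_add_three_mul_log_two]

lemma Gamma_add_one_le_of_mem_Icc {x : ℝ} (hx : x ∈ Icc (1 / 2) (3 / 2)) :
    Gamma (x + 1) ≤ √(π / 2) * x ^ x := by
  have hpos : 0 < x := by linarith [hx.1]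
  rw [← log_le_log_iff (Gamma_pos_of_pos (by linarith)) (by positivity),
    log_mul (by positivity) (by positivity), log_sqrt (by positivity),
    log_div pi_ne_zero two_ne_zero, log_rpow hpos]
  linarith [log_Gamma_add_one_sub_mul_log_le_of_mem_Icc hx]

lemma Gamma_add_one_add_one_le {x C : ℝ} (hx : 0 < x) (hC : 0 ≤ C)
    (h : Gamma (x + 1) ≤ C * x ^ x) : Gamma (x + 1 + 1) ≤ C * (x + 1) ^ (x + 1) :=
  calc Gamma (x + 1 + 1) = (x + 1) * Gamma (x + 1) := Gamma_add_one (by positivity)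
    _ ≤ (x + 1) * (C * (x + 1) ^ x) := by
      gcongr
      exact h.trans (by gcongr; linarith)
    _ = C * (x + 1) ^ (x + 1) := by rw [rpow_add_one (by positivity)]; ring

lemma Gamma_add_one_le_sqrt_pi_div_two_mul_rpow_self {b : ℝ} (hb : 1 / 2 ≤ b) :
    Gamma (b + 1) ≤ √(π / 2) * b ^ b := by
  have shift : ∀ n : ℕ, ∀ x ∈ Icc (1 / 2 : ℝ) (3 / 2),
      Gamma (x + n + 1) ≤ √(π / 2) * (x + n) ^ (x + n) := by
    intro n x hx
    induction n with
    | zero => simpa using Gamma_add_one_le_of_mem_Icc hx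
    | succ n ih =>
      push_cast
      rw [← add_assoc]
      exact Gamma_add_one_add_one_le (by linarith [hx.1, n.cast_nonneg (α := ℝ)])
        (sqrt_nonneg _) ih
  set n := ⌊b - 1 / 2⌋₊
  have hn : (n : ℝ) ≤ b - 1 / 2 := Nat.floor_le (by linarith)
  have hn' : b - 1 / 2 < n + 1 := Nat.lt_floor_add_one _
  simpa using shift n (b - n) ⟨by linarith, by linarith⟩

theorem stmt0 (a b : ℝ) (ha : 0 < a) (hb : 1/2 ≤ b) :
    (∫ x in Set.Ioi (0:ℝ), Real.exp (-a * x ^ (1/b))) = Real.Gamma (b+1) / a ^ b ∧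
    Real.Gamma (b+1) / a ^ b ≤ Real.sqrt (Real.pi/2) * (b/a) ^ b := by
  have hb0 : 0 < b := by linarith
  constructor
  · rw [integral_exp_neg_mul_rpow (one_div_pos.2 hb0) ha, one_div_one_div, neg_div, one_div_div,
      div_one, rpow_neg ha.le, div_eq_inv_mul]
  · rw [div_rpow hb0.le ha.le, mul_div_assoc']
    gcongr
    exact Gamma_add_one_le_sqrt_pi_div_two_mul_rpow_self hb
end

section
/- Let f₁,…,fₙ be drawn uniformly at random without replacement from a finite population c₁,…,cₚ of real numbers, and let g₁,…,gₙ be drawn uniformly at random with replacement from the same population. Then for every continuous convex function φ: ℝ → ℝ, E[φ(f₁+⋯+fₙ)] ≤ E[φ(g₁+⋯+gₙ)]. -/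
/-!
Hoeffding's coupling. Resample a uniformly random injective sample `e : ι ↪ α` with
replacement from its own values: draw `π : ι → ι` with probability `couplingWeight (e ∘ π)`.
A function `h : ι → α` arises as `e ∘ π` from exactly `coveringEmbeddingCount h` embeddings
`e`, and the weights are inversely proportional to that count, so `e ∘ π` is uniformly
distributed on `ι → α`. The weights are also invariant under permutations of `ι`, so every
`π i` is uniform on `ι` and the conditional mean of `∑ i, c (e (π i))` given `e` is
`∑ i, c (e i)`. Jensen's inequality for the conditional law gives the comparison of the two
expectations.
-/

open Finset MeasureTheory ProbabilityTheory
open scoped BigOperators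

section Coupling

variable {ι α : Type*} [Fintype ι] [Fintype α]

open Classical in
noncomputable def coveringEmbeddingCount (h : ι → α) : ℕ :=
  #{e : ι ↪ α | Set.range h ⊆ Set.range e}

theorem coveringEmbeddingCount_pos [Nonempty (ι ↪ α)] (h : ι → α) :
    0 < coveringEmbeddingCount h := by
  classical
  obtain ⟨t, hht, ht⟩ := exists_superset_card_eq (s := univ.image h) (n := Fintype.card ι)
    card_image_le (Fintype.card_le_of_embedding (Classical.arbitrary (ι ↪ α)))
  let q : ι ≃ t := Fintype.equivOfCardEq (by simpa using ht.symm)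
  refine card_pos.2
    ⟨q.toEmbedding.trans (Function.Embedding.subtype _), mem_filter.2 ⟨mem_univ _, ?_⟩⟩
  rintro _ ⟨i, rfl⟩
  exact ⟨q.symm ⟨h i, hht (mem_image_of_mem h (mem_univ i))⟩, by simp⟩

theorem coveringEmbeddingCount_perm_comp (s : Equiv.Perm α) (h : ι → α) :
    coveringEmbeddingCount (s ∘ h) = coveringEmbeddingCount h := by
  classical
  refine (card_equiv ((Equiv.refl ι).embeddingCongr s) fun e => ?_).symm
  simp [Set.range_comp, Function.Embedding.coe_trans, Set.preimage_image_eq _ s.injective]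

variable [DecidableEq ι]

theorem sum_sum_embedding_comp {M : Type*} [AddCommMonoid M] (F : (ι → α) → M) :
    ∑ e : ι ↪ α, ∑ π : ι → ι, F (e ∘ π) = ∑ h : ι → α, coveringEmbeddingCount h • F h := by
  classical
  have fiber (e : ι ↪ α) :
      ∑ π : ι → ι, F (e ∘ π) = ∑ h : ι → α with Set.range h ⊆ Set.range e, F h := by
    refine sum_bij (fun π _ => e ∘ π) (fun π _ => ?_) (fun π _ π' _ hπ => ?_) (fun h hh => ?_)
      fun _ _ => rfl
    · simpa using Set.range_comp_subset_range π e
    · exact funext fun i => e.injective (congrFun hπ i)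
    · choose π hπ using Set.range_subset_iff.1 (mem_filter.1 hh).2
      exact ⟨π, mem_univ _, funext hπ⟩
  simp_rw [fiber, sum_filter]
  rw [sum_comm]
  simp [coveringEmbeddingCount, ← sum_filter, sum_const]

theorem sum_filter_apply_eq_of_swap_invariant {w : (ι → ι) → ℝ}
    (hw : ∀ a b π, w (Equiv.swap a b ∘ π) = w π) (i a : ι) :
    ∑ π with π i = a, w π = (∑ π, w π) / Fintype.card ι := by
  have marginal_eq (b : ι) : ∑ π with π i = b, w π = ∑ π with π i = a, w π := by
    refine sum_nbij' (Equiv.swap a b ∘ ·) (Equiv.swap a b ∘ ·) ?_ ?_ ?_ ?_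
      fun π _ => (hw a b π).symm
    all_goals intro π hπ; simp_all [Function.comp_def]
  have : Nonempty ι := ⟨i⟩
  rw [← sum_fiberwise univ (· i) w, sum_congr rfl fun b _ => marginal_eq b, sum_const, card_univ,
    nsmul_eq_mul, mul_div_cancel_left₀ _ (Nat.cast_ne_zero.2 Fintype.card_ne_zero)]

theorem sum_smul_sum_comp_of_swap_invariant {E : Type*} [AddCommGroup E] [Module ℝ E]
    {w : (ι → ι) → ℝ} (hw : ∀ a b π, w (Equiv.swap a b ∘ π) = w π) (hw_sum : ∑ π, w π = 1)
    (x : ι → E) : ∑ π, w π • ∑ i, x (π i) = ∑ i, x i := by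
  have coordinate (i : ι) : ∑ π, w π • x (π i) = (Fintype.card ι : ℝ)⁻¹ • ∑ a, x a := by
    rw [← sum_fiberwise univ (· i), smul_sum]
    refine sum_congr rfl fun a _ => ?_
    rw [sum_congr rfl fun π hπ => by rw [(mem_filter.1 hπ).2], ← sum_smul,
      sum_filter_apply_eq_of_swap_invariant hw, hw_sum, one_div]
  rcases isEmpty_or_nonempty ι with hι | hι
  · simp
  simp_rw [smul_sum]
  rw [sum_comm]
  have hcard : (Fintype.card ι : ℝ) ≠ 0 := Nat.cast_ne_zero.2 Fintype.card_ne_zero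
  simp_rw [coordinate, sum_const, card_univ, ← Nat.cast_smul_eq_nsmul ℝ, smul_smul,
    mul_inv_cancel₀ hcard, one_smul]

noncomputable def couplingWeight (h : ι → α) : ℝ :=
  Fintype.card (ι ↪ α) / (Fintype.card (ι → α) * coveringEmbeddingCount h)

theorem couplingWeight_nonneg (h : ι → α) : 0 ≤ couplingWeight h := by
  unfold couplingWeight; positivity

theorem couplingWeight_perm_comp (s : Equiv.Perm α) (h : ι → α) :
    couplingWeight (s ∘ h) = couplingWeight h := by
  rw [couplingWeight, couplingWeight, coveringEmbeddingCount_perm_comp]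

theorem couplingWeight_embedding_comp_swap (e : ι ↪ α) (a b : ι) (π : ι → ι) :
    couplingWeight (e ∘ Equiv.swap a b ∘ π) = couplingWeight (e ∘ π) := by
  classical
  rw [← Function.comp_assoc, ← e.injective.swap_comp, Function.comp_assoc,
    couplingWeight_perm_comp]

theorem coveringEmbeddingCount_mul_couplingWeight [Nonempty (ι ↪ α)] (h : ι → α) :
    coveringEmbeddingCount h * couplingWeight h =
      (Fintype.card (ι ↪ α) : ℝ) / Fintype.card (ι → α) := by
  have := coveringEmbeddingCount_pos h
  rw [couplingWeight]
  field_simp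

theorem sum_couplingWeight_embedding_comp [Nonempty (ι ↪ α)] (e : ι ↪ α) :
    ∑ π : ι → ι, couplingWeight (e ∘ π) = 1 := by
  have independent (e' : ι ↪ α) :
      ∑ π : ι → ι, couplingWeight (e' ∘ π) = ∑ π : ι → ι, couplingWeight (e ∘ π) := by
    obtain ⟨s, hs⟩ := Equiv.Perm.exists_extending_pair e e' e.injective e'.injective
    have : ⇑e' = s ∘ e := funext fun i => (hs i).symm
    simp_rw [this, Function.comp_assoc, couplingWeight_perm_comp]
  have hN : (Fintype.card (ι ↪ α) : ℝ) ≠ 0 := Nat.cast_ne_zero.2 Fintype.card_ne_zero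
  have : Nonempty (ι → α) := ⟨Classical.arbitrary (ι ↪ α)⟩
  have hK : (Fintype.card (ι → α) : ℝ) ≠ 0 := Nat.cast_ne_zero.2 Fintype.card_ne_zero
  have total := sum_sum_embedding_comp (couplingWeight (ι := ι) (α := α))
  simp_rw [independent, nsmul_eq_mul, coveringEmbeddingCount_mul_couplingWeight, sum_const,
    card_univ, nsmul_eq_mul, mul_div_cancel₀ _ hK] at total
  exact (mul_eq_left₀ hN).1 total

theorem ConvexOn.expect_map_sum_embedding_le [Nonempty (ι ↪ α)] {E : Type*} [AddCommGroup E]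
    [Module ℝ E] {φ : E → ℝ} (hφ : ConvexOn ℝ Set.univ φ) (c : α → E) :
    𝔼 e : ι ↪ α, φ (∑ i, c (e i)) ≤ 𝔼 h : ι → α, φ (∑ i, c (h i)) := by
  have jensen (e : ι ↪ α) :
      φ (∑ i, c (e i)) ≤ ∑ π : ι → ι, couplingWeight (e ∘ π) * φ (∑ i, c ((e ∘ π) i)) := by
    have := hφ.map_sum_le (t := univ) (p := fun π : ι → ι => ∑ i, c (e (π i)))
      (fun _ _ => couplingWeight_nonneg _) (sum_couplingWeight_embedding_comp e)
      (fun _ _ => Set.mem_univ _)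
    rw [sum_smul_sum_comp_of_swap_invariant (couplingWeight_embedding_comp_swap e)
      (sum_couplingWeight_embedding_comp e) (fun i => c (e i))] at this
    simpa only [smul_eq_mul, Function.comp_apply] using this
  have : Nonempty (ι → α) := ⟨Classical.arbitrary (ι ↪ α)⟩
  have hN : (Fintype.card (ι ↪ α) : ℝ) ≠ 0 := Nat.cast_ne_zero.2 Fintype.card_ne_zero
  calc 𝔼 e : ι ↪ α, φ (∑ i, c (e i))
      ≤ 𝔼 e : ι ↪ α, ∑ π : ι → ι, couplingWeight (e ∘ π) * φ (∑ i, c ((e ∘ π) i)) :=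
        expect_le_expect fun e _ => jensen e
    _ = (∑ h : ι → α, coveringEmbeddingCount h * couplingWeight h * φ (∑ i, c (h i))) /
          Fintype.card (ι ↪ α) := by
        simp_rw [Fintype.expect_eq_sum_div_card, sum_sum_embedding_comp
          (fun h => couplingWeight h * φ (∑ i, c (h i))), nsmul_eq_mul, mul_assoc]
    _ = 𝔼 h : ι → α, φ (∑ i, c (h i)) := by
        simp_rw [coveringEmbeddingCount_mul_couplingWeight, Fintype.expect_eq_sum_div_card]
        rw [← mul_sum]
        field_simp

end Coupling

theorem integral_comp_eq_expect_of_map_eq_uniformOn {Ω α : Type*} [MeasurableSpace Ω]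
    {μ : Measure Ω} [IsProbabilityMeasure μ] [Fintype α] [MeasurableSpace α]
    [MeasurableSingletonClass α] {X : Ω → α} (hX : Measurable X)
    (hX_law : μ.map X = uniformOn Set.univ) (f : α → ℝ) :
    ∫ ω, f (X ω) ∂μ = 𝔼 a, f a := by
  have := Measure.isProbabilityMeasure_map (μ := μ) hX.aemeasurable
  rw [hX_law] at this
  rw [← integral_map hX.aemeasurable (measurable_of_finite f).aestronglyMeasurable, hX_law,
    integral_fintype .of_finite, Fintype.expect_eq_sum_div_card, sum_div]
  refine sum_congr rfl fun a _ => ?_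
  simp [measureReal_def, uniformOn_univ, div_eq_inv_mul]

theorem map_fun_eq_uniformOn_of_iIndepFun {Ω ι α : Type*} [MeasurableSpace Ω]
    {μ : Measure Ω} [Fintype ι] [Fintype α] [MeasurableSpace α]
    [MeasurableSingletonClass α] {X : ι → Ω → α} (hX : ∀ i, Measurable (X i))
    (hX_indep : iIndepFun X μ) (hX_law : ∀ i, μ.map (X i) = uniformOn Set.univ) :
    μ.map (fun ω i => X i ω) = uniformOn Set.univ := by
  rw [hX_indep.map_fun_eq_pi_map fun i => (hX i).aemeasurable, funext hX_law, ← uniformOn_pi,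
    Set.pi_univ]

theorem stmt7_general {Ω : Type*} [MeasurableSpace Ω] (μ : Measure Ω) [IsProbabilityMeasure μ]
    (n p : ℕ) (hnp : n ≤ p) (c : Fin p → ℝ)
    [MeasurableSpace (Fin n ↪ Fin p)] [MeasurableSingletonClass (Fin n ↪ Fin p)]
    (σ : Ω → (Fin n ↪ Fin p)) (hσmeas : Measurable σ)
    (hσlaw : Measure.map σ μ = uniformOn (Set.univ : Set (Fin n ↪ Fin p)))
    (g : Fin n → Ω → Fin p) (hgmeas : ∀ i, Measurable (g i))
    (hgindep : iIndepFun g μ)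
    (hglaw : ∀ i, Measure.map (g i) μ = uniformOn (Set.univ : Set (Fin p)))
    (φ : ℝ → ℝ) (hφconv : ConvexOn ℝ Set.univ φ) :
    (∫ ω, φ (∑ i, c (σ ω i)) ∂μ) ≤ ∫ ω, φ (∑ i, c (g i ω)) ∂μ := by
  have : Nonempty (Fin n ↪ Fin p) := Function.Embedding.nonempty_of_card_le (by simpa using hnp)
  rw [integral_comp_eq_expect_of_map_eq_uniformOn hσmeas hσlaw (fun e => φ (∑ i, c (e i))),
    integral_comp_eq_expect_of_map_eq_uniformOn (measurable_pi_lambda _ hgmeas)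
      (map_fun_eq_uniformOn_of_iIndepFun hgmeas hgindep hglaw) (fun h => φ (∑ i, c (h i)))]
  exact hφconv.expect_map_sum_embedding_le c

theorem stmt7 {Ω : Type*} [MeasurableSpace Ω] (μ : Measure Ω) [IsProbabilityMeasure μ]
    (n p : ℕ) (hnp : n ≤ p) (c : Fin p → ℝ)
    [MeasurableSpace (Fin n ↪ Fin p)] [MeasurableSingletonClass (Fin n ↪ Fin p)]
    (σ : Ω → (Fin n ↪ Fin p)) (hσmeas : Measurable σ)
    (hσlaw : Measure.map σ μ = uniformOn (Set.univ : Set (Fin n ↪ Fin p)))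
    (g : Fin n → Ω → Fin p) (hgmeas : ∀ i, Measurable (g i))
    (hgindep : iIndepFun g μ)
    (hglaw : ∀ i, Measure.map (g i) μ = uniformOn (Set.univ : Set (Fin p)))
    (φ : ℝ → ℝ) (hφcont : Continuous φ) (hφconv : ConvexOn ℝ Set.univ φ) :
    (∫ ω, φ (∑ i, c (σ ω i)) ∂μ) ≤ ∫ ω, φ (∑ i, c (g i ω)) ∂μ :=
  stmt7_general μ n p hnp c σ hσmeas hσlaw g hgmeas hgindep hglaw φ hφconv
end

section
/- Let λ > 0, let M̂ be a p×p symmetric matrix, let M = θθ^T for a vector θ ∈ ℝ^p with support S, and suppose ‖M̂ - M‖_∞ < λ (entrywise maximum norm) and ‖θ‖² ≥ 2λs where s = |S|. Then any maximizer P̂ of the SDP objective P ↦ ⟨M̂, P⟩ - λ‖P‖₁ over the Fantope F¹ = {P : P = P^T, tr(P) = 1, 0 ⪯ P ⪯ I} satisfies supp(P̂) ⊆ S, i.e., P̂_{ij} = 0 whenever (i,j) ∉ S×S. -/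
open Matrix

/-- The Fantope `F¹`: symmetric matrices `P` with `tr(P) = 1` and `0 ⪯ P ⪯ I`. -/
def Fantope1 {p : ℕ} (P : Matrix (Fin p) (Fin p) ℝ) : Prop :=
  P.IsSymm ∧ P.trace = 1 ∧ P.PosSemidef ∧ (1 - P).PosSemidef

/-- SDP objective `⟨Mhat, P⟩ - λ‖P‖₁`. -/
noncomputable def sdpObj {p : ℕ} (M : Matrix (Fin p) (Fin p) ℝ) (lam : ℝ)
    (P : Matrix (Fin p) (Fin p) ℝ) : ℝ :=
  (∑ i, ∑ j, M i j * P i j) - lam * ∑ i, ∑ j, |P i j|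

/-!
The candidate `θθᵀ/‖θ‖²` has value at least `‖θ‖²(‖θ‖² - 2λs) ≥ 0`, so the maximal value is
nonnegative. If `P̂` had a nonzero entry outside `S × S`, where `|M̂ i j| < λ`, zeroing all such
entries would strictly increase the objective. The result `Q = D P̂ D` (with `D` the diagonal
projection onto `S`) is positive semidefinite of trace `t ≤ 1`; either `Q = 0`, or `Q / t ∈ F¹`
because `Q ⪯ tr(Q) • I`, and then `f(Q) = t f(Q / t) ≤ t f(P̂) ≤ f(P̂)`: a contradiction.
-/

open scoped ComplexOrder in
theorem Matrix.PosSemidef.trace_smul_one_sub {n 𝕜 : Type*} [Fintype n] [DecidableEq n]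
    [RCLike 𝕜] {A : Matrix n n 𝕜} (hA : A.PosSemidef) : (A.trace • 1 - A).PosSemidef := by
  have hU := Unitary.isUnit_coe (U := hA.1.eigenvectorUnitary)
  have hUU : (hA.1.eigenvectorUnitary : Matrix n n 𝕜) *
      star (hA.1.eigenvectorUnitary : Matrix n n 𝕜) = 1 :=
    Unitary.mul_star_self_of_mem hA.1.eigenvectorUnitary.2
  have hspec := hA.1.spectral_theorem
  have htr := hA.1.trace_eq_sum_eigenvalues
  have hev := hA.eigenvalues_nonneg
  rw [Unitary.conjStarAlgAut_apply] at hspec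
  generalize (hA.1.eigenvectorUnitary : Matrix n n 𝕜) = U at *
  generalize hA.1.eigenvalues = ev at *
  -- in the eigenbasis, `tr(A) • 1 - A` is diagonal with entries `∑ ev - ev i ≥ 0`
  have hdiag :
      A.trace • 1 - A = U * diagonal (fun i => ((∑ j, ev j - ev i : ℝ) : 𝕜)) * star U := by
    have hsub : diagonal (fun i => ((∑ j, ev j - ev i : ℝ) : 𝕜))
        = (∑ j, (ev j : 𝕜)) • 1 - diagonal (fun i => (ev i : 𝕜)) := by
      ext i j; by_cases h : i = j <;> simp [h]
    rw [htr, hsub, Matrix.mul_sub, Matrix.sub_mul, Matrix.mul_smul, mul_one, Matrix.smul_mul,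
      hUU, hspec]
    rfl
  rw [hdiag, hU.posSemidef_star_right_conjugate_iff, posSemidef_diagonal_iff]
  intro i
  exact_mod_cast sub_nonneg.2 (Finset.single_le_sum (fun j _ => hev j) (Finset.mem_univ i))

variable {p : ℕ}

theorem fantope1_inv_trace_smul {A : Matrix (Fin p) (Fin p) ℝ} (hA : A.PosSemidef)
    (htr : 0 < A.trace) : Fantope1 (A.trace⁻¹ • A) := by
  have hsymm : A.IsSymm := by
    rw [IsSymm, ← conjTranspose_eq_transpose_of_trivial]; exact hA.1
  refine ⟨hsymm.smul _, ?_, hA.smul (inv_nonneg.2 htr.le), ?_⟩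
  · rw [trace_smul, smul_eq_mul, inv_mul_cancel₀ htr.ne']
  · have h : 1 - A.trace⁻¹ • A = A.trace⁻¹ • (A.trace • 1 - A) := by
      rw [smul_sub, smul_smul, inv_mul_cancel₀ htr.ne', one_smul]
    rw [h]
    exact hA.trace_smul_one_sub.smul (inv_nonneg.2 htr.le)

theorem sdpObj_eq_sum (M : Matrix (Fin p) (Fin p) ℝ) (lam : ℝ)
    (P : Matrix (Fin p) (Fin p) ℝ) : sdpObj M lam P = ∑ i, ∑ j, (M i j * P i j - lam * |P i j|) := by
  simp only [sdpObj, Finset.mul_sum, Finset.sum_sub_distrib]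

theorem sdpObj_smul (M : Matrix (Fin p) (Fin p) ℝ) (lam : ℝ) {c : ℝ} (hc : 0 ≤ c)
    (P : Matrix (Fin p) (Fin p) ℝ) : sdpObj M lam (c • P) = c * sdpObj M lam P := by
  simp only [sdpObj_eq_sum, Matrix.smul_apply, smul_eq_mul, abs_mul, abs_of_nonneg hc,
    Finset.mul_sum]
  exact Finset.sum_congr rfl fun i _ => Finset.sum_congr rfl fun j _ => by ring

theorem sdpObj_zero (M : Matrix (Fin p) (Fin p) ℝ) (lam : ℝ) : sdpObj M lam 0 = 0 := by
  simp [sdpObj]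

theorem sdpObj_le_of_posSemidef_of_trace_le_one {M Phat Q : Matrix (Fin p) (Fin p) ℝ}
    {lam : ℝ}
    (hmax : ∀ P, Fantope1 P → sdpObj M lam P ≤ sdpObj M lam Phat)
    (hPhat : 0 ≤ sdpObj M lam Phat) (hQ : Q.PosSemidef) (htr : Q.trace ≤ 1) :
    sdpObj M lam Q ≤ sdpObj M lam Phat := by
  rcases hQ.trace_nonneg.eq_or_lt with htr0 | htr0
  · rw [(hQ.trace_eq_zero_iff).1 htr0.symm, sdpObj_zero]
    exact hPhat
  · have hQ_eq : Q = Q.trace • (Q.trace⁻¹ • Q) := by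
      rw [smul_smul, mul_inv_cancel₀ htr0.ne', one_smul]
    rw [hQ_eq, sdpObj_smul M lam htr0.le]
    calc Q.trace * sdpObj M lam (Q.trace⁻¹ • Q) ≤ Q.trace * sdpObj M lam Phat :=
          mul_le_mul_of_nonneg_left (hmax _ (fantope1_inv_trace_smul hQ htr0)) htr0.le
      _ ≤ sdpObj M lam Phat := mul_le_of_le_one_left hPhat htr

theorem mul_sub_mul_abs_nonpos {m x lam : ℝ} (hm : |m| ≤ lam) : m * x - lam * |x| ≤ 0 := by
  have := abs_mul m x ▸ le_abs_self (m * x)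
  nlinarith [abs_nonneg x]

theorem mul_sub_mul_abs_neg {m x lam : ℝ} (hm : |m| < lam) (hx : x ≠ 0) :
    m * x - lam * |x| < 0 := by
  have := abs_mul m x ▸ le_abs_self (m * x)
  nlinarith [abs_pos.2 hx]

noncomputable def restrictBlock (S : Set (Fin p)) (P : Matrix (Fin p) (Fin p) ℝ) :
    Matrix (Fin p) (Fin p) ℝ :=
  diagonal (S.indicator 1) * P * diagonal (S.indicator 1)

theorem restrictBlock_apply (S : Set (Fin p)) (P : Matrix (Fin p) (Fin p) ℝ) (i j : Fin p) :
    restrictBlock S P i j = S.indicator 1 i * P i j * S.indicator 1 j := by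
  simp only [restrictBlock, diagonal_mul, mul_diagonal]

theorem restrictBlock_apply_of_not_mem {S : Set (Fin p)} (P : Matrix (Fin p) (Fin p) ℝ)
    {i j : Fin p} (hij : i ∉ S ∨ j ∉ S) : restrictBlock S P i j = 0 := by
  rcases hij with h | h <;> simp [restrictBlock_apply, Set.indicator_of_notMem h]

theorem restrictBlock_apply_of_mem {S : Set (Fin p)} (P : Matrix (Fin p) (Fin p) ℝ)
    {i j : Fin p} (hi : i ∈ S) (hj : j ∈ S) : restrictBlock S P i j = P i j := by
  simp [restrictBlock_apply, Set.indicator_of_mem hi, Set.indicator_of_mem hj]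

theorem Matrix.PosSemidef.restrictBlock {P : Matrix (Fin p) (Fin p) ℝ} (hP : P.PosSemidef)
    (S : Set (Fin p)) : (restrictBlock S P).PosSemidef := by
  have h := hP.mul_mul_conjTranspose_same (diagonal (S.indicator 1))
  rwa [diagonal_conjTranspose, star_trivial] at h

theorem trace_restrictBlock_le {P : Matrix (Fin p) (Fin p) ℝ} (hP : P.PosSemidef)
    (S : Set (Fin p)) : (restrictBlock S P).trace ≤ P.trace := by
  refine Finset.sum_le_sum fun i _ => ?_
  by_cases hi : i ∈ S
  · simp [restrictBlock_apply_of_mem P hi hi]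
  · simp [restrictBlock_apply_of_not_mem P (Or.inl hi), hP.diag_nonneg]

theorem sdpObj_lt_sdpObj_restrictBlock {M P : Matrix (Fin p) (Fin p) ℝ} {lam : ℝ}
    {S : Set (Fin p)} (hM : ∀ i j, (i ∉ S ∨ j ∉ S) → |M i j| < lam)
    {i₀ j₀ : Fin p} (hij₀ : i₀ ∉ S ∨ j₀ ∉ S) (hP : P i₀ j₀ ≠ 0) :
    sdpObj M lam P < sdpObj M lam (restrictBlock S P) := by
  have hterm : ∀ i j, M i j * P i j - lam * |P i j|
      ≤ M i j * restrictBlock S P i j - lam * |restrictBlock S P i j| := by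
    intro i j
    by_cases hij : i ∉ S ∨ j ∉ S
    · rw [restrictBlock_apply_of_not_mem P hij, mul_zero, abs_zero, mul_zero, sub_zero]
      exact mul_sub_mul_abs_nonpos (hM i j hij).le
    · rw [not_or, not_not, not_not] at hij
      rw [restrictBlock_apply_of_mem P hij.1 hij.2]
  have hterm₀ : M i₀ j₀ * P i₀ j₀ - lam * |P i₀ j₀|
      < M i₀ j₀ * restrictBlock S P i₀ j₀ - lam * |restrictBlock S P i₀ j₀| := by
    rw [restrictBlock_apply_of_not_mem P hij₀, mul_zero, abs_zero, mul_zero, sub_zero]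
    exact mul_sub_mul_abs_neg (hM i₀ j₀ hij₀) hP
  rw [sdpObj_eq_sum, sdpObj_eq_sum]
  exact Finset.sum_lt_sum (fun i _ => Finset.sum_le_sum fun j _ => hterm i j)
    ⟨i₀, Finset.mem_univ _,
      Finset.sum_lt_sum (fun j _ => hterm i₀ j) ⟨j₀, Finset.mem_univ _, hterm₀⟩⟩

theorem sq_sum_abs_le_ncard_support_mul (θ : Fin p → ℝ) :
    (∑ i, |θ i|) ^ 2 ≤ {i | θ i ≠ 0}.ncard * ∑ i, θ i ^ 2 := by
  classical
  have hS : {i | θ i ≠ 0} = ↑(Finset.univ.filter fun i => |θ i| ≠ 0) := by ext; simp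
  rw [hS, Set.ncard_coe_finset, ← Finset.sum_filter_ne_zero]
  refine sq_sum_le_card_mul_sum_sq.trans (mul_le_mul_of_nonneg_left ?_ (Nat.cast_nonneg _))
  simp only [sq_abs]
  exact Finset.sum_le_sum_of_subset_of_nonneg (Finset.filter_subset _ _)
    fun i _ _ => sq_nonneg _

theorem sdpObj_vecMulVec_self_nonneg {M : Matrix (Fin p) (Fin p) ℝ} {lam : ℝ}
    (hlam : 0 ≤ lam) {θ : Fin p → ℝ} (hM : ∀ i j, |M i j - θ i * θ j| ≤ lam)
    (hsignal : 2 * lam * ({i | θ i ≠ 0}.ncard : ℝ) ≤ ∑ i, θ i ^ 2) :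
    0 ≤ sdpObj M lam (vecMulVec θ θ) := by
  have hterm : ∀ i j, θ i ^ 2 * θ j ^ 2 - 2 * lam * (|θ i| * |θ j|)
      ≤ M i j * vecMulVec θ θ i j - lam * |vecMulVec θ θ i j| := by
    intro i j
    rw [vecMulVec_apply, ← abs_mul]
    -- `M i j = x + (M i j - x)` with `x = θ i θ j`, and the error term costs at most `λ|x|`
    have herr := abs_mul (M i j - θ i * θ j) (θ i * θ j) ▸
      neg_abs_le ((M i j - θ i * θ j) * (θ i * θ j))
    nlinarith [mul_le_mul_of_nonneg_right (hM i j) (abs_nonneg (θ i * θ j))]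
  set n := ∑ i, θ i ^ 2
  set T := ∑ i, |θ i|
  have hlower : n ^ 2 - 2 * lam * T ^ 2 ≤ sdpObj M lam (vecMulVec θ θ) := by
    rw [sdpObj_eq_sum, sq, sq, Finset.sum_mul_sum, Finset.sum_mul_sum, Finset.mul_sum,
      ← Finset.sum_sub_distrib]
    refine Finset.sum_le_sum fun i _ => ?_
    rw [Finset.mul_sum, ← Finset.sum_sub_distrib]
    exact Finset.sum_le_sum fun j _ => hterm i j
  have hT := sq_sum_abs_le_ncard_support_mul θ
  calc 0 ≤ n * (n - 2 * lam * {i | θ i ≠ 0}.ncard) :=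
        mul_nonneg (Finset.sum_nonneg fun i _ => sq_nonneg (θ i)) (sub_nonneg.2 hsignal)
    _ = n ^ 2 - 2 * lam * ({i | θ i ≠ 0}.ncard * n) := by ring
    _ ≤ n ^ 2 - 2 * lam * T ^ 2 := by gcongr
    _ ≤ sdpObj M lam (vecMulVec θ θ) := hlower

theorem exists_fantope1_sdpObj_nonneg {M : Matrix (Fin p) (Fin p) ℝ} {lam : ℝ}
    (hlam : 0 ≤ lam) {θ : Fin p → ℝ} (hθ0 : θ ≠ 0) (hM : ∀ i j, |M i j - θ i * θ j| ≤ lam)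
    (hsignal : 2 * lam * ({i | θ i ≠ 0}.ncard : ℝ) ≤ ∑ i, θ i ^ 2) :
    ∃ P, Fantope1 P ∧ 0 ≤ sdpObj M lam P := by
  have hpsd : (vecMulVec θ θ).PosSemidef := by
    simpa only [star_trivial] using posSemidef_vecMulVec_self_star θ
  have htr : 0 < (vecMulVec θ θ).trace := by
    simpa only [trace_vecMulVec, star_trivial] using dotProduct_self_star_pos_iff.2 hθ0
  refine ⟨_, fantope1_inv_trace_smul hpsd htr, ?_⟩
  rw [sdpObj_smul M lam (inv_nonneg.2 htr.le)]
  exact mul_nonneg (inv_nonneg.2 htr.le) (sdpObj_vecMulVec_self_nonneg hlam hM hsignal)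

theorem stmt12_general (p : ℕ) (lam : ℝ)
    (Mhat : Matrix (Fin p) (Fin p) ℝ)
    (θ : Fin p → ℝ) (hθ0 : θ ≠ 0)
    (hinf : ∀ i j, |Mhat i j - θ i * θ j| < lam)
    (hsignal : 2 * lam * ({i | θ i ≠ 0}.ncard : ℝ) ≤ ∑ i, θ i ^ 2)
    (Phat : Matrix (Fin p) (Fin p) ℝ) (hPhat : Fantope1 Phat)
    (hmax : ∀ P : Matrix (Fin p) (Fin p) ℝ, Fantope1 P → sdpObj Mhat lam P ≤ sdpObj Mhat lam Phat) :
    ∀ i j, (θ i = 0 ∨ θ j = 0) → Phat i j = 0 := by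
  obtain ⟨k, -⟩ := Function.ne_iff.1 hθ0
  have hlam : 0 ≤ lam := (abs_nonneg _).trans (hinf k k).le
  obtain ⟨P₀, hP₀, hP₀obj⟩ :=
    exists_fantope1_sdpObj_nonneg hlam hθ0 (fun i j => (hinf i j).le) hsignal
  have hPhat_nonneg : 0 ≤ sdpObj Mhat lam Phat := hP₀obj.trans (hmax P₀ hP₀)
  set S := {i | θ i ≠ 0}
  have hoff : ∀ i j, (i ∉ S ∨ j ∉ S) → |Mhat i j| < lam := by
    intro i j hij
    have hθij : θ i * θ j = 0 := by simpa [S] using hij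
    simpa [hθij] using hinf i j
  intro i j hij
  by_contra hne
  have hij' : i ∉ S ∨ j ∉ S := by simpa [S] using hij
  have hlt := sdpObj_lt_sdpObj_restrictBlock hoff hij' hne
  have hle := sdpObj_le_of_posSemidef_of_trace_le_one hmax hPhat_nonneg
    (hPhat.2.2.1.restrictBlock S) ((trace_restrictBlock_le hPhat.2.2.1 S).trans hPhat.2.1.le)
  exact hle.not_gt hlt

theorem stmt12 (p : ℕ) (lam : ℝ) (hlam : 0 < lam)
    (Mhat : Matrix (Fin p) (Fin p) ℝ) (hsymm : Mhat.IsSymm)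
    (θ : Fin p → ℝ) (hθ0 : θ ≠ 0)
    (hinf : ∀ i j, |Mhat i j - θ i * θ j| < lam)
    (hsignal : 2 * lam * ({i | θ i ≠ 0}.ncard : ℝ) ≤ ∑ i, θ i ^ 2)
    (Phat : Matrix (Fin p) (Fin p) ℝ) (hPhat : Fantope1 Phat)
    (hmax : ∀ P : Matrix (Fin p) (Fin p) ℝ, Fantope1 P → sdpObj Mhat lam P ≤ sdpObj Mhat lam Phat) :
    ∀ i j, (θ i = 0 ∨ θ j = 0) → Phat i j = 0 :=
  stmt12_general p lam Mhat θ hθ0 hinf hsignal Phat hPhat hmax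
end

section
/- Let M̂ be a p×p symmetric matrix, M = θθ^T with ‖θ‖² > 0 and s = |supp(θ)|, λ > 0, and suppose ‖M̂ - M‖_∞ ≤ λ. Suppose furthermore that M̂ - λZ̃ is supported on S×S (where S = supp(θ) and Z̃ is a symmetric matrix with ‖Z̃‖_∞ ≤ 1 and zero diagonal) with ‖θ‖² - 4λs > 0. Then the largest eigenvalue of M̂ - λZ̃ is at least ‖θ‖² - 2λs, every other eigenvalue is at most 2λs, and hence the spectral gap between the first and second eigenvalues is at least ‖θ‖² - 4λs. -/
/-!
Write `A = M̂ - λZ̃` and `σ = 2λs`. The matrix `A - θθᵀ` vanishes off `S × S` and has entries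
bounded by `2λ` on it, so by Cauchy–Schwarz on `S` its quadratic form is at most `σ‖x‖²` in
absolute value. Instead of Weyl's inequality, a variational argument in the eigenbasis of `A`:
testing with `θ` gives `λ_max ≥ ‖θ‖² - σ`, and for any other eigenvalue `μ_j` there is a nonzero
`x ⊥ θ` in the span of the eigenvectors of `μ_j` and `λ_max`, whose Rayleigh quotient is then at
least `μ_j` and at most `σ`.
-/

open Matrix

namespace Matrix

theorem abs_sub_smul_sub_vecMulVec_apply_le {m n : Type*} {M Z : Matrix m n ℝ} {u : m → ℝ}
    {v : n → ℝ} {lam : ℝ} (hlam : 0 ≤ lam) {i : m} {j : n} (hM : |M i j - u i * v j| ≤ lam)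
    (hZ : |Z i j| ≤ 1) : |(M - lam • Z - vecMulVec u v) i j| ≤ 2 * lam :=
  calc |(M - lam • Z - vecMulVec u v) i j|
      = |(M i j - u i * v j) - lam * Z i j| := by
        rw [sub_apply, sub_apply, smul_apply, vecMulVec_apply, smul_eq_mul, sub_right_comm]
    _ ≤ |M i j - u i * v j| + |lam * Z i j| := abs_sub _ _
    _ ≤ lam + lam := by
        rw [abs_mul, abs_of_nonneg hlam]
        exact add_le_add hM (mul_le_of_le_one_right hlam hZ)
    _ = 2 * lam := by ring

variable {n : Type*} [Fintype n]

open Finset in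
theorem abs_dotProduct_mulVec_le_of_support {E : Matrix n n ℝ} {S : Finset n} {c : ℝ}
    (hE : ∀ i ∈ S, ∀ j ∈ S, |E i j| ≤ c) (hS : ∀ i j, (i ∉ S ∨ j ∉ S) → E i j = 0)
    (x : n → ℝ) : |x ⬝ᵥ E *ᵥ x| ≤ c * #S * (x ⬝ᵥ x) := by
  have hsum : x ⬝ᵥ E *ᵥ x = ∑ i ∈ S, ∑ j ∈ S, x i * E i j * x j := by
    simp only [dotProduct, mulVec, mul_sum]
    refine (sum_subset S.subset_univ fun i _ hi => ?_).symm.trans (sum_congr rfl fun i _ => ?_)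
    · simp [hS i _ (Or.inl hi)]
    · refine (sum_subset S.subset_univ fun j _ hj => ?_).symm.trans (sum_congr rfl fun j _ => ?_)
      · simp [hS i j (Or.inr hj)]
      · ring
  obtain rfl | ⟨i₀, hi₀⟩ := S.eq_empty_or_nonempty
  · simp [hsum]
  have hc : 0 ≤ c := (abs_nonneg _).trans (hE i₀ hi₀ i₀ hi₀)
  calc |x ⬝ᵥ E *ᵥ x| ≤ ∑ i ∈ S, ∑ j ∈ S, |x i| * c * |x j| := by
        rw [hsum]
        refine (abs_sum_le_sum_abs _ _).trans (sum_le_sum fun i hi => ?_)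
        refine (abs_sum_le_sum_abs _ _).trans (sum_le_sum fun j hj => ?_)
        rw [abs_mul, abs_mul]
        gcongr
        exact hE i hi j hj
    _ = c * (∑ i ∈ S, |x i|) ^ 2 := by
        rw [sq, sum_mul_sum, mul_sum]
        exact sum_congr rfl fun i _ => by rw [mul_sum]; exact sum_congr rfl fun j _ => by ring
    _ ≤ c * (#S * ∑ i ∈ S, |x i| ^ 2) := by gcongr; exact sq_sum_le_card_mul_sum_sq
    _ ≤ c * #S * (x ⬝ᵥ x) := by
        rw [mul_assoc]
        gcongr
        simp only [sq_abs, dotProduct, ← sq]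
        exact sum_le_sum_of_subset_of_nonneg S.subset_univ fun i _ _ => sq_nonneg (x i)

theorem dotProduct_sub_vecMulVec_mulVec {R : Type*} [CommRing R] (B : Matrix n n R)
    (θ x : n → R) : x ⬝ᵥ (B - vecMulVec θ θ) *ᵥ x = x ⬝ᵥ B *ᵥ x - (θ ⬝ᵥ x) ^ 2 := by
  rw [sub_mulVec, dotProduct_sub, vecMulVec_mulVec, op_smul_eq_smul, dotProduct_smul,
    smul_eq_mul, dotProduct_comm x θ, sq]

variable [DecidableEq n]

theorem dotProduct_mulVec_mulVec_of_transpose_mul_self {R : Type*} [CommSemiring R]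
    {U : Matrix n n R} (hU : Uᵀ * U = 1) (d e : n → R) : (U *ᵥ d) ⬝ᵥ (U *ᵥ e) = d ⬝ᵥ e := by
  rw [dotProduct_mulVec, ← vecMul_transpose, vecMul_vecMul, hU, vecMul_one]

namespace IsHermitian

variable {A : Matrix n n ℝ} (hA : A.IsHermitian)

theorem transpose_eigenvectorUnitary_mul_self :
    (hA.eigenvectorUnitary : Matrix n n ℝ)ᵀ * hA.eigenvectorUnitary = 1 := by
  simpa [star_eq_conjTranspose] using Unitary.coe_star_mul_self hA.eigenvectorUnitary

theorem eigenvectorUnitary_mul_transpose_self :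
    (hA.eigenvectorUnitary : Matrix n n ℝ) * (hA.eigenvectorUnitary : Matrix n n ℝ)ᵀ = 1 := by
  simpa [star_eq_conjTranspose] using Unitary.coe_mul_star_self hA.eigenvectorUnitary

theorem mul_eigenvectorUnitary :
    A * hA.eigenvectorUnitary = hA.eigenvectorUnitary * diagonal hA.eigenvalues := by
  have h := hA.conjStarAlgAut_star_eigenvectorUnitary
  rw [Unitary.conjStarAlgAut_star_apply] at h
  calc A * hA.eigenvectorUnitary
      = hA.eigenvectorUnitary * star hA.eigenvectorUnitary * A * hA.eigenvectorUnitary := by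
        rw [Unitary.coe_mul_star_self, one_mul]
    _ = hA.eigenvectorUnitary * diagonal hA.eigenvalues := by
        rw [mul_assoc, mul_assoc, ← mul_assoc _ A, Unitary.coe_star, h]
        rfl

theorem eigenvectorUnitary_mulVec_dotProduct_mulVec (d e : n → ℝ) :
    (hA.eigenvectorUnitary *ᵥ d) ⬝ᵥ (A *ᵥ (hA.eigenvectorUnitary *ᵥ e)) =
      d ⬝ᵥ (diagonal hA.eigenvalues *ᵥ e) := by
  rw [mulVec_mulVec, mul_eigenvectorUnitary, ← mulVec_mulVec,
    dotProduct_mulVec_mulVec_of_transpose_mul_self hA.transpose_eigenvectorUnitary_mul_self]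

theorem eigenvectorUnitary_mulVec_transpose_mulVec (x : n → ℝ) :
    (hA.eigenvectorUnitary : Matrix n n ℝ) *ᵥ ((hA.eigenvectorUnitary : Matrix n n ℝ)ᵀ *ᵥ x) =
      x := by
  rw [mulVec_mulVec, eigenvectorUnitary_mul_transpose_self, one_mulVec]

theorem dotProduct_mulVec_le_of_eigenvalues_le {c : ℝ} (hc : ∀ j, hA.eigenvalues j ≤ c)
    (x : n → ℝ) : x ⬝ᵥ A *ᵥ x ≤ c * (x ⬝ᵥ x) := by
  set U : Matrix n n ℝ := ↑hA.eigenvectorUnitary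
  set d := Uᵀ *ᵥ x
  have hx : U *ᵥ d = x := hA.eigenvectorUnitary_mulVec_transpose_mulVec x
  rw [← hx, eigenvectorUnitary_mulVec_dotProduct_mulVec,
    dotProduct_mulVec_mulVec_of_transpose_mul_self hA.transpose_eigenvectorUnitary_mul_self]
  simp only [dotProduct, mulVec_diagonal, Finset.mul_sum]
  exact Finset.sum_le_sum fun i _ => by nlinarith [hc i, mul_self_nonneg (d i)]

theorem exists_dotProduct_eq_zero_min_eigenvalues_le {j k : n} (hjk : j ≠ k) (θ : n → ℝ) :
    ∃ x : n → ℝ, 0 < x ⬝ᵥ x ∧ θ ⬝ᵥ x = 0 ∧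
      min (hA.eigenvalues j) (hA.eigenvalues k) * (x ⬝ᵥ x) ≤ x ⬝ᵥ A *ᵥ x := by
  set U : Matrix n n ℝ := ↑hA.eigenvectorUnitary
  set c := Uᵀ *ᵥ θ
  have hθ : U *ᵥ c = θ := hA.eigenvectorUnitary_mulVec_transpose_mulVec θ
  have hU : Uᵀ * U = 1 := hA.transpose_eigenvectorUnitary_mul_self
  obtain ⟨a, b, hab, horth⟩ : ∃ a b : ℝ, 0 < a ^ 2 + b ^ 2 ∧ a * c j + b * c k = 0 := by
    by_cases hc : c j = 0
    · exact ⟨1, 0, by norm_num, by simp [hc]⟩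
    · exact ⟨c k, -c j, by nlinarith [sq_pos_of_ne_zero hc, sq_nonneg (c k)], by ring⟩
  set d : n → ℝ := Pi.single j a + Pi.single k b
  have hd : ∀ v : n → ℝ, v ⬝ᵥ d = v j * a + v k * b := fun v => by
    simp only [d, dotProduct_add, dotProduct_single]
  have hdj : d j = a := by simp [d, hjk.symm]
  have hdk : d k = b := by simp [d, hjk]
  have hdd : d ⬝ᵥ d = a ^ 2 + b ^ 2 := by rw [hd, hdj, hdk]; ring
  have hdAd : d ⬝ᵥ (diagonal hA.eigenvalues *ᵥ d) =
      hA.eigenvalues j * a ^ 2 + hA.eigenvalues k * b ^ 2 := by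
    rw [dotProduct_comm, hd, mulVec_diagonal, mulVec_diagonal, hdj, hdk]; ring
  refine ⟨U *ᵥ d, ?_, ?_, ?_⟩
  · rwa [dotProduct_mulVec_mulVec_of_transpose_mul_self hU, hdd]
  · rw [← hθ, dotProduct_mulVec_mulVec_of_transpose_mul_self hU, hd, ← horth]; ring
  · rw [dotProduct_mulVec_mulVec_of_transpose_mul_self hU,
      eigenvectorUnitary_mulVec_dotProduct_mulVec, hdd, hdAd]
    nlinarith [min_le_left (hA.eigenvalues j) (hA.eigenvalues k),
      min_le_right (hA.eigenvalues j) (hA.eigenvalues k), sq_nonneg a, sq_nonneg b]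

theorem exists_eigenvalues_of_abs_dotProduct_mulVec_sub_sq_le {θ : n → ℝ} {σ : ℝ}
    (hθ : 0 < θ ⬝ᵥ θ) (h : ∀ x, |x ⬝ᵥ A *ᵥ x - (θ ⬝ᵥ x) ^ 2| ≤ σ * (x ⬝ᵥ x)) :
    ∃ i₀, θ ⬝ᵥ θ - σ ≤ hA.eigenvalues i₀ ∧ ∀ j ≠ i₀, hA.eigenvalues j ≤ σ := by
  have : Nonempty n := Finset.univ_nonempty_iff.mp (Finset.nonempty_of_sum_ne_zero hθ.ne')
  obtain ⟨i₀, hmax⟩ := Finite.exists_max hA.eigenvalues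
  refine ⟨i₀, ?_, fun j hj => ?_⟩
  · have hupper := hA.dotProduct_mulVec_le_of_eigenvalues_le hmax θ
    have hlower := (abs_le.mp (h θ)).1
    nlinarith
  · obtain ⟨x, hx, hθx, hmin⟩ := hA.exists_dotProduct_eq_zero_min_eigenvalues_le hj θ
    have hupper := (abs_le.mp (h x)).2
    rw [min_eq_left (hmax j)] at hmin
    rw [hθx] at hupper
    exact le_of_mul_le_mul_right (by linarith) hx

end IsHermitian
end Matrix

theorem stmt19_general (p : ℕ) (Mhat Ztil : Matrix (Fin p) (Fin p) ℝ) (θ : Fin p → ℝ)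
    (lam : ℝ) (hlam : 0 < lam)
    (hZbound : ∀ i j, |Ztil i j| ≤ 1)
    (hinf : ∀ i j, |Mhat i j - θ i * θ j| ≤ lam)
    (hsupp : ∀ i j, (θ i = 0 ∨ θ j = 0) → (Mhat - lam • Ztil) i j = 0)
    (hA : (Mhat - lam • Ztil).IsHermitian)
    (hgap : 0 < (∑ i, θ i ^ 2) - 4 * lam * ({i | θ i ≠ 0}.ncard : ℝ)) :
    ∃ i₀ : Fin p,
      (∑ i, θ i ^ 2) - 2 * lam * ({i | θ i ≠ 0}.ncard : ℝ) ≤ hA.eigenvalues i₀ ∧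
      ∀ j ≠ i₀, hA.eigenvalues j ≤ 2 * lam * ({i | θ i ≠ 0}.ncard : ℝ) := by
  set S := {i | θ i ≠ 0}.toFinset
  have hθθ : θ ⬝ᵥ θ = ∑ i, θ i ^ 2 := by simp only [dotProduct, sq]
  have hsupport : ∀ i j, (i ∉ S ∨ j ∉ S) → (Mhat - lam • Ztil - vecMulVec θ θ) i j = 0 := by
    intro i j hij
    have hθ : θ i = 0 ∨ θ j = 0 := by simpa [S] using hij
    rw [Matrix.sub_apply, hsupp i j hθ, vecMulVec_apply]
    rcases hθ with h | h <;> simp [h]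
  have hperturb : ∀ x, |x ⬝ᵥ (Mhat - lam • Ztil) *ᵥ x - (θ ⬝ᵥ x) ^ 2| ≤
      2 * lam * ({i | θ i ≠ 0}.ncard : ℝ) * (x ⬝ᵥ x) := fun x => by
    have h := abs_dotProduct_mulVec_le_of_support
      (fun i _ j _ => abs_sub_smul_sub_vecMulVec_apply_le hlam.le (hinf i j) (hZbound i j))
      hsupport x
    rwa [dotProduct_sub_vecMulVec_mulVec, ← Set.ncard_eq_toFinset_card'] at h
  have hθ : 0 < θ ⬝ᵥ θ := by
    have : 0 ≤ lam * ({i | θ i ≠ 0}.ncard : ℝ) := by positivity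
    rw [hθθ]; linarith
  obtain ⟨i₀, htop, hrest⟩ := hA.exists_eigenvalues_of_abs_dotProduct_mulVec_sub_sq_le hθ hperturb
  exact ⟨i₀, hθθ ▸ htop, hrest⟩

theorem stmt19 (p : ℕ) (Mhat Ztil : Matrix (Fin p) (Fin p) ℝ) (θ : Fin p → ℝ)
    (lam : ℝ) (hlam : 0 < lam)
    (hMsymm : Mhat.IsSymm) (hZsymm : Ztil.IsSymm)
    (hZdiag : ∀ i, Ztil i i = 0) (hZbound : ∀ i j, |Ztil i j| ≤ 1)
    (hinf : ∀ i j, |Mhat i j - θ i * θ j| ≤ lam)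
    (hsupp : ∀ i j, (θ i = 0 ∨ θ j = 0) → (Mhat - lam • Ztil) i j = 0)
    (hA : (Mhat - lam • Ztil).IsHermitian)
    (hgap : 0 < (∑ i, θ i ^ 2) - 4 * lam * ({i | θ i ≠ 0}.ncard : ℝ)) :
    ∃ i₀ : Fin p,
      (∑ i, θ i ^ 2) - 2 * lam * ({i | θ i ≠ 0}.ncard : ℝ) ≤ hA.eigenvalues i₀ ∧
      ∀ j ≠ i₀, hA.eigenvalues j ≤ 2 * lam * ({i | θ i ≠ 0}.ncard : ℝ) :=
  stmt19_general p Mhat Ztil θ lam hlam hZbound hinf hsupp hA hgap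
end
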